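/- In the algebra P generated by e_i, f_i (1 ≤ i ≤ d) and K (relations as above), let ν = Σ_{i=1}^d e_i f_i. Then ν^j equals j! times the sum of all monomials in e_i f_i (1 ≤ i ≤ d) of length 2j; in particular ν^d = d! ∏_{i=1}^d e_i f_i and ν^{d+1} = 0. -/

import Mathlib

/-- Generators of the algebra `P`: `e i`, `f i` (`1 ≤ i ≤ d`) and `K`. -/
inductive SFGen (d : ℕ) : Type
  | e : Fin d → SFGen d
  | f : Fin d → SFGen d
  | K : SFGen d

/-- The defining relations of `P`: `K² = 1`, the `e i`, `f j` pairwise anticommute,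
and `K` anticommutes with every `e i` and `f i`. -/
inductive SFRel (d : ℕ) : FreeAlgebra ℂ (SFGen d) → FreeAlgebra ℂ (SFGen d) → Prop
  | Ksq : SFRel d (FreeAlgebra.ι ℂ (SFGen.K (d := d)) * FreeAlgebra.ι ℂ SFGen.K) 1
  | ee (i j : Fin d) : SFRel d (FreeAlgebra.ι ℂ (SFGen.e i) * FreeAlgebra.ι ℂ (SFGen.e j))
      (-(FreeAlgebra.ι ℂ (SFGen.e j) * FreeAlgebra.ι ℂ (SFGen.e i)))
  | ff (i j : Fin d) : SFRel d (FreeAlgebra.ι ℂ (SFGen.f i) * FreeAlgebra.ι ℂ (SFGen.f j))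
      (-(FreeAlgebra.ι ℂ (SFGen.f j) * FreeAlgebra.ι ℂ (SFGen.f i)))
  | ef (i j : Fin d) : SFRel d (FreeAlgebra.ι ℂ (SFGen.e i) * FreeAlgebra.ι ℂ (SFGen.f j))
      (-(FreeAlgebra.ι ℂ (SFGen.f j) * FreeAlgebra.ι ℂ (SFGen.e i)))
  | Ke (i : Fin d) : SFRel d (FreeAlgebra.ι ℂ (SFGen.K (d := d)) * FreeAlgebra.ι ℂ (SFGen.e i))
      (-(FreeAlgebra.ι ℂ (SFGen.e i) * FreeAlgebra.ι ℂ SFGen.K))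
  | Kf (i : Fin d) : SFRel d (FreeAlgebra.ι ℂ (SFGen.K (d := d)) * FreeAlgebra.ι ℂ (SFGen.f i))
      (-(FreeAlgebra.ι ℂ (SFGen.f i) * FreeAlgebra.ι ℂ SFGen.K))

/-- The algebra `P` generated by `e i`, `f i` (`1 ≤ i ≤ d`) and `K` with the above
relations. -/
def SF (d : ℕ) : Type := RingQuot (SFRel d)

noncomputable instance (d : ℕ) : Ring (SF d) := inferInstanceAs (Ring (RingQuot (SFRel d)))
noncomputable instance (d : ℕ) : Algebra ℂ (SF d) :=
  inferInstanceAs (Algebra ℂ (RingQuot (SFRel d)))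

/-- The generator `e i` of `P`. -/
noncomputable def eg (d : ℕ) (i : Fin d) : SF d :=
  RingQuot.mkAlgHom ℂ (SFRel d) (FreeAlgebra.ι ℂ (SFGen.e i))

/-- The generator `f i` of `P`. -/
noncomputable def fg (d : ℕ) (i : Fin d) : SF d :=
  RingQuot.mkAlgHom ℂ (SFRel d) (FreeAlgebra.ι ℂ (SFGen.f i))

/-- The generator `K` of `P`. -/
noncomputable def Kg (d : ℕ) : SF d :=
  RingQuot.mkAlgHom ℂ (SFRel d) (FreeAlgebra.ι ℂ SFGen.K)

/-- The monomial `(∏ᵢ e iᵐⁱ f iⁿⁱ) Kˡ` of `P`, in the order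
`e 1^{m₁} f 1^{n₁} ⋯ e d^{m_d} f d^{n_d} K^ℓ`. -/
noncomputable def SFmono (d : ℕ) (m n : Fin d → Bool) (ℓ : Bool) : SF d :=
  (List.ofFn (fun i : Fin d =>
      (if m i then eg d i else 1) * (if n i then fg d i else 1))).prod *
    (if ℓ then Kg d else 1)

/-- `ν = Σᵢ eᵢ fᵢ`. -/
noncomputable def nuSF (d : ℕ) : SF d := ∑ i : Fin d, eg d i * fg d i

/-- The monomial `∏_{i ∈ S} eᵢ fᵢ` (factors in increasing order of `i`). -/
noncomputable def prodEF (d : ℕ) (S : Finset (Fin d)) : SF d :=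
  (List.ofFn (fun i : Fin d => if i ∈ S then eg d i * fg d i else 1)).prod

variable {R : Type*} [Ring R]

lemma swap_head {x y : R} (h : x * y = -(y * x)) (z : R) :
    x * (y * z) = -(y * (x * z)) := by
  rw [← mul_assoc, h, neg_mul, mul_assoc]

lemma pair_comm (a b c g : R)
    (h1 : c * a = -(a * c)) (h2 : c * b = -(b * c))
    (h3 : g * a = -(a * g)) (h4 : g * b = -(b * g)) :
    (c * g) * (a * b) = (a * b) * (c * g) := by
  calc (c * g) * (a * b) = c * (g * (a * b)) := by rw [mul_assoc]
    _ = c * (-(a * (g * b))) := by rw [swap_head h3]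
    _ = -(c * (a * (g * b))) := by rw [mul_neg]
    _ = -(c * (a * (-(b * g)))) := by rw [h4]
    _ = c * (a * (b * g)) := by rw [mul_neg, mul_neg, neg_neg]
    _ = -(a * (c * (b * g))) := by rw [swap_head h1]
    _ = -(a * (-(b * (c * g)))) := by rw [swap_head h2]
    _ = a * (b * (c * g)) := by rw [mul_neg, neg_neg]
    _ = (a * b) * (c * g) := by rw [mul_assoc]

lemma pair_sq (a b : R) (hfe : b * a = -(a * b)) (hbb : b * b = 0) :
    (a * b) * (a * b) = 0 := by
  calc (a * b) * (a * b) = a * (b * (a * b)) := by rw [mul_assoc]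
    _ = a * (-(a * (b * b))) := by rw [swap_head hfe]
    _ = 0 := by rw [hbb, mul_zero, neg_zero, mul_zero]

lemma key : ∀ {n : ℕ} (c : Fin n → R)
    (hc : ∀ i j, c i * c j = c j * c i) (hs : ∀ i, c i * c i = 0)
    (m : Fin n → Prop) [DecidablePred m] (i : Fin n),
    c i * (List.ofFn fun k => if m k then c k else 1).prod =
      if m i then 0 else (List.ofFn fun k => if (m k ∨ k = i) then c k else 1).prod := by
  intro n
  induction n with
  | zero => intro c hc hs m _ i; exact i.elim0
  | succ n ih =>
    intro c hc hs m _ i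
    rw [List.ofFn_succ, List.ofFn_succ, List.prod_cons, List.prod_cons]
    induction i using Fin.cases with
    | zero =>
      by_cases h0 : m 0
      · rw [if_pos h0, if_pos h0, ← mul_assoc, hs 0, zero_mul]
      · rw [if_neg h0, if_neg h0, one_mul, if_pos (Or.inr rfl)]
        have hf : (fun (i : Fin n) => if m i.succ ∨ i.succ = 0 then c i.succ else 1)
            = (fun i => if m i.succ then c i.succ else 1) := by
          funext k
          have : ¬ (k.succ = (0 : Fin (n+1))) := Fin.succ_ne_zero k
          simp [this]
        rw [hf]
    | succ j =>
      have hcomm : c j.succ * (if m 0 then c 0 else 1) = (if m 0 then c 0 else 1) * c j.succ := by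
        by_cases h0 : m 0 <;> simp [h0, hc]
      rw [← mul_assoc, hcomm, mul_assoc]
      have := ih (fun k => c k.succ) (fun a b => hc a.succ b.succ) (fun a => hs a.succ)
        (fun k => m k.succ) j
      rw [this]
      by_cases hj : m j.succ
      · simp [hj]
      · have hne : ¬ ((0 : Fin (n+1)) = j.succ) := fun h => Fin.succ_ne_zero j h.symm
        rw [if_neg hj, if_neg hj]
        congr 1
        · congr 1
          simp [hne]
        · have hf : (fun (k : Fin n) => if m k.succ ∨ k = j then c k.succ else 1)
              = (fun (i : Fin n) => if m i.succ ∨ i.succ = j.succ then c i.succ else 1) := by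
            funext k
            have : (k.succ = j.succ) ↔ (k = j) :=
              ⟨fun h => Fin.succ_injective _ h, fun h => by rw [h]⟩
            simp [this]
          rw [hf]

section Main
variable {d : ℕ}

lemma ee' (i j : Fin d) : eg d i * eg d j = -(eg d j * eg d i) := by
  have := RingQuot.mkAlgHom_rel ℂ (SFRel.ee (d := d) i j)
  simp only [map_mul, map_neg] at this; exact this

lemma ff' (i j : Fin d) : fg d i * fg d j = -(fg d j * fg d i) := by
  have := RingQuot.mkAlgHom_rel ℂ (SFRel.ff (d := d) i j)
  simp only [map_mul, map_neg] at this; exact this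

lemma ef' (i j : Fin d) : eg d i * fg d j = -(fg d j * eg d i) := by
  have := RingQuot.mkAlgHom_rel ℂ (SFRel.ef (d := d) i j)
  simp only [map_mul, map_neg] at this; exact this

lemma half_zero {x : SF d} (h : x = -x) : x = 0 := by
  have h2 : (2 : ℂ) • x = 0 := by
    rw [two_smul]
    nth_rewrite 1 [h]
    exact neg_add_cancel x
  calc x = ((2 : ℂ)⁻¹ * 2) • x := by norm_num
    _ = (2 : ℂ)⁻¹ • ((2 : ℂ) • x) := by rw [mul_smul]
    _ = 0 := by rw [h2, smul_zero]

lemma e_sq (i : Fin d) : eg d i * eg d i = 0 := half_zero (ee' i i)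
lemma f_sq (i : Fin d) : fg d i * fg d i = 0 := half_zero (ff' i i)

lemma x_comm (i j : Fin d) :
    (eg d i * fg d i) * (eg d j * fg d j) = (eg d j * fg d j) * (eg d i * fg d i) := by
  apply pair_comm
  · exact ee' i j
  · exact ef' i j
  · exact by rw [ef' j i, neg_neg]
  · exact ff' i j

lemma x_sq (i : Fin d) : (eg d i * fg d i) * (eg d i * fg d i) = 0 :=
  pair_sq _ _ (by rw [ef' i i, neg_neg]) (f_sq i)

lemma mul_prodEF (S : Finset (Fin d)) (i : Fin d) :
    (eg d i * fg d i) * prodEF d S = if i ∈ S then 0 else prodEF d (insert i S) := by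
  have h := key (R := SF d) (fun k => eg d k * fg d k)
    (fun a b => (x_comm a b)) (fun a => x_sq a) (fun k => k ∈ S) i
  rw [prodEF]
  rw [h]
  by_cases hi : i ∈ S
  · rw [if_pos hi, if_pos hi]
  · rw [if_neg hi, if_neg hi, prodEF]
    have hf : (fun (k : Fin d) => if (k ∈ S ∨ k = i) then eg d k * fg d k else 1)
        = (fun k => if k ∈ insert i S then eg d k * fg d k else 1) := by
      funext k
      simp [Finset.mem_insert, or_comm]
    rw [hf]

lemma compl_filter_eq (S : Finset (Fin d)) :
    Finset.univ.filter (fun i => i ∉ S) = Sᶜ := by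
  ext i; simp

lemma nu_mul (S : Finset (Fin d)) :
    nuSF d * prodEF d S = ∑ i ∈ Sᶜ, prodEF d (insert i S) := by
  rw [nuSF, Finset.sum_mul, Finset.sum_congr rfl (fun i _ => mul_prodEF S i)]
  rw [Finset.sum_ite, Finset.sum_const_zero, zero_add, compl_filter_eq]

lemma count (j : ℕ) (F : Finset (Fin d) → SF d) :
    ∑ S ∈ Finset.univ.powersetCard j, ∑ i ∈ Sᶜ, F (insert i S)
      = ∑ T ∈ Finset.univ.powersetCard (j+1), (j+1) • F T := by
  have h1 : ∀ T ∈ Finset.univ.powersetCard (j+1), (j+1) • F T = ∑ i ∈ T, F T := by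
    intro T hT
    rw [Finset.sum_const, (Finset.mem_powersetCard_univ.mp hT)]
  rw [Finset.sum_congr rfl h1, Finset.sum_sigma', Finset.sum_sigma']
  apply Finset.sum_nbij'
    (i := fun p => (⟨insert p.2 p.1, p.2⟩ : Σ _ : Finset (Fin d), Fin d))
    (j := fun p => (⟨p.1.erase p.2, p.2⟩ : Σ _ : Finset (Fin d), Fin d))
  · intro p hp
    simp only [Finset.mem_sigma, Finset.mem_powersetCard_univ, Finset.mem_compl] at hp ⊢
    exact ⟨by rw [Finset.card_insert_of_notMem hp.2, hp.1], Finset.mem_insert_self _ _⟩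
  · intro p hp
    simp only [Finset.mem_sigma, Finset.mem_powersetCard_univ, Finset.mem_compl] at hp ⊢
    exact ⟨by rw [Finset.card_erase_of_mem hp.2, hp.1]; rfl, Finset.notMem_erase _ _⟩
  · intro p hp
    simp only [Finset.mem_sigma, Finset.mem_powersetCard_univ, Finset.mem_compl] at hp
    simp [Finset.erase_insert hp.2]
  · intro p hp
    simp only [Finset.mem_sigma, Finset.mem_powersetCard_univ, Finset.mem_compl] at hp
    simp [Finset.insert_erase hp.2]
  · intro p hp
    rfl

lemma nu_pow_main : ∀ j : ℕ, (nuSF d) ^ j =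
    (j.factorial : ℂ) • ∑ S ∈ Finset.univ.powersetCard j, prodEF d S := by
  intro j
  induction j with
  | zero =>
    simp only [pow_zero, Nat.factorial_zero, Nat.cast_one, one_smul,
      Finset.powersetCard_zero, Finset.sum_singleton]
    rw [prodEF]
    simp
  | succ j ih =>
    rw [pow_succ', ih, mul_smul_comm, Finset.mul_sum,
      Finset.sum_congr rfl (fun S _ => nu_mul S), count j (prodEF d),
      ← Finset.smul_sum]
    rw [← Nat.cast_smul_eq_nsmul ℂ (j+1), smul_smul]
    congr 1
    push_cast [Nat.factorial_succ]
    ring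

end Main

/-- `ν^j` equals `j!` times the sum of all monomials `∏_{i∈S} eᵢfᵢ` over the
`j`-element subsets `S ⊆ {1,…,d}`; in particular `ν^d = d! ∏ᵢ eᵢfᵢ` and `ν^(d+1) = 0`. -/
theorem nu_pow_eq (d : ℕ) :
    (∀ j : ℕ, (nuSF d) ^ j =
      (j.factorial : ℂ) • ∑ S ∈ Finset.univ.powersetCard j, prodEF d S) ∧
    (nuSF d) ^ d = (d.factorial : ℂ) • prodEF d Finset.univ ∧
    (nuSF d) ^ (d + 1) = 0 := by
  refine ⟨nu_pow_main, ?_, ?_⟩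
  · rw [nu_pow_main d]
    congr 1
    have : (Finset.univ : Finset (Fin d)).powersetCard d = {Finset.univ} := by
      have := Finset.powersetCard_self (Finset.univ : Finset (Fin d))
      rwa [Finset.card_univ, Fintype.card_fin] at this
    rw [this, Finset.sum_singleton]
  · rw [nu_pow_main (d+1)]
    have : (Finset.univ : Finset (Fin d)).powersetCard (d+1) = ∅ := by
      rw [Finset.powersetCard_eq_empty, Finset.card_univ, Fintype.card_fin]
      omega
    rw [this, Finset.sum_empty, smul_zero]
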